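/- arXiv:2511.19503 — 9 statements merged into one kernel-verified Lean document; each statement's English description precedes it below -/
import Mathlib

section
/- Every Gauss sequence is an Euler-Gauss sequence: if an integer sequence (a_n) satisfies a_{p^r m} ≡ a_{p^{r-1} m} (mod p^r) for all primes p and all integers r, m ≥ 1, then for every n ≥ 1, the product of a_{n/d} over divisors d of n with μ(d) = 1 is congruent modulo n to the product of a_{n/d} over divisors d of n with μ(d) = -1. -/
/-!
Fix a prime power `p ^ k` dividing `n`. Toggling the factor `p` is an involution of the
squarefree divisors of `n` that flips the sign of `μ`, and it changes `a (n / d)` only by the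
Gauss congruence `a (p ^ k * m) ≡ a (p ^ (k - 1) * m) [ZMOD p ^ k]`, since `p ^ k ∣ n / d` whenever
`p ∤ d`. So the two products agree modulo every prime power dividing `n`, hence modulo `n`.
-/

open ArithmeticFunction
open scoped ArithmeticFunction.Moebius

def IsGaussSequence (a : ℕ → ℤ) : Prop :=
  ∀ p r m : ℕ, p.Prime → 1 ≤ r → 1 ≤ m →
    (p : ℤ) ^ r ∣ a (p ^ r * m) - a (p ^ (r - 1) * m)

def togglePrime (p d : ℕ) : ℕ := if p ∣ d then d / p else d * p

section TogglePrime

variable {p d : ℕ}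

theorem togglePrime_of_dvd (h : p ∣ d) : togglePrime p d = d / p := if_pos h

theorem togglePrime_of_not_dvd (h : ¬p ∣ d) : togglePrime p d = d * p := if_neg h

theorem not_dvd_div_of_squarefree (hp : p.Prime) (hd : Squarefree d) (hpd : p ∣ d) :
    ¬p ∣ d / p := by
  rw [← Nat.mul_div_cancel' hpd] at hd
  exact (Nat.Prime.coprime_iff_not_dvd hp).mp (Nat.coprime_of_squarefree_mul hd)

theorem moebius_mul_prime (hp : p.Prime) (hpd : ¬p ∣ d) : μ (d * p) = -μ d := by
  have hcop : d.Coprime p := ((Nat.Prime.coprime_iff_not_dvd hp).mpr hpd).symm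
  rw [isMultiplicative_moebius.map_mul_of_coprime hcop, moebius_apply_prime hp, mul_neg_one]

theorem togglePrime_togglePrime (hp : p.Prime) (hd : Squarefree d) :
    togglePrime p (togglePrime p d) = d := by
  by_cases hpd : p ∣ d
  · rw [togglePrime_of_dvd hpd, togglePrime_of_not_dvd (not_dvd_div_of_squarefree hp hd hpd),
      Nat.div_mul_cancel hpd]
  · rw [togglePrime_of_not_dvd hpd, togglePrime_of_dvd (dvd_mul_left p d),
      Nat.mul_div_cancel d hp.pos]

theorem moebius_togglePrime (hp : p.Prime) (hd : Squarefree d) :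
    μ (togglePrime p d) = -μ d := by
  by_cases hpd : p ∣ d
  · have hdiv := not_dvd_div_of_squarefree hp hd hpd
    conv_rhs => rw [← Nat.div_mul_cancel hpd, moebius_mul_prime hp hdiv, neg_neg]
    rw [togglePrime_of_dvd hpd]
  · rw [togglePrime_of_not_dvd hpd, moebius_mul_prime hp hpd]

theorem togglePrime_dvd {n : ℕ} (hp : p.Prime) (hpn : p ∣ n) (hdn : d ∣ n) :
    togglePrime p d ∣ n := by
  by_cases hpd : p ∣ d
  · rw [togglePrime_of_dvd hpd]
    exact (Nat.div_dvd_of_dvd hpd).trans hdn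
  · rw [togglePrime_of_not_dvd hpd]
    exact (((Nat.Prime.coprime_iff_not_dvd hp).mpr hpd).symm).mul_dvd_of_dvd_of_dvd hdn hpn

theorem togglePrime_mem_divisors_filter_moebius {n : ℕ} {ε : ℤ} (hp : p.Prime) (hpn : p ∣ n)
    (hε : ε ≠ 0) (hd : d ∈ n.divisors.filter (fun d => μ d = ε)) :
    togglePrime p d ∈ n.divisors.filter (fun d => μ d = -ε) := by
  obtain ⟨⟨hdn, hn⟩, hμ⟩ := by simpa only [Finset.mem_filter, Nat.mem_divisors] using hd
  have hsq : Squarefree d := moebius_ne_zero_iff_squarefree.mp (hμ ▸ hε)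
  simp only [Finset.mem_filter, Nat.mem_divisors]
  exact ⟨⟨togglePrime_dvd hp hpn hdn, hn⟩, by rw [moebius_togglePrime hp hsq, hμ]⟩

end TogglePrime

namespace IsGaussSequence

variable {a : ℕ → ℤ} {p k n d : ℕ}

theorem modEq_div_mul_prime (hG : IsGaussSequence a) (hp : p.Prime) (hk : 0 < k) (hn : n ≠ 0)
    (hpk : p ^ k ∣ n) (hdn : d ∣ n) (hpd : ¬p ∣ d) :
    a (n / (d * p)) ≡ a (n / d) [ZMOD p ^ k] := by
  obtain ⟨j, rfl⟩ : ∃ j, k = j + 1 := ⟨k - 1, by omega⟩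
  have hcop : d.Coprime (p ^ (j + 1)) :=
    (((Nat.Prime.coprime_iff_not_dvd hp).mpr hpd).pow_left _).symm
  obtain ⟨m, rfl⟩ := hcop.mul_dvd_of_dvd_of_dvd hdn hpk
  have hd : 0 < d := Nat.pos_of_ne_zero (left_ne_zero_of_mul (left_ne_zero_of_mul hn))
  have hm : 1 ≤ m := Nat.pos_of_ne_zero (right_ne_zero_of_mul hn)
  have hdiv : d * p ^ (j + 1) * m / (d * p) = p ^ j * m := by
    rw [show d * p ^ (j + 1) * m = d * p * (p ^ j * m) by ring,
      Nat.mul_div_cancel_left _ (Nat.mul_pos hd hp.pos)]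
  rw [hdiv, mul_assoc, Nat.mul_div_cancel_left _ hd, Int.modEq_iff_dvd]
  simpa using hG p (j + 1) m hp (by omega) hm

theorem modEq_div_togglePrime (hG : IsGaussSequence a) (hp : p.Prime) (hk : 0 < k) (hn : n ≠ 0)
    (hpk : p ^ k ∣ n) (hdn : d ∣ n) (hd : Squarefree d) :
    a (n / togglePrime p d) ≡ a (n / d) [ZMOD p ^ k] := by
  by_cases hpd : p ∣ d
  · have hdiv := not_dvd_div_of_squarefree hp hd hpd
    have h := hG.modEq_div_mul_prime hp hk hn hpk ((Nat.div_dvd_of_dvd hpd).trans hdn) hdiv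
    rw [Nat.div_mul_cancel hpd] at h
    rw [togglePrime_of_dvd hpd]
    exact h.symm
  · rw [togglePrime_of_not_dvd hpd]
    exact hG.modEq_div_mul_prime hp hk hn hpk hdn hpd

theorem prod_moebius_modEq (hG : IsGaussSequence a) (hp : p.Prime) (hk : 0 < k) (hn : n ≠ 0)
    (hpk : p ^ k ∣ n) :
    ∏ d ∈ n.divisors.filter (fun d => μ d = -1), a (n / d) ≡
      ∏ d ∈ n.divisors.filter (fun d => μ d = 1), a (n / d) [ZMOD p ^ k] := by
  have hpn : p ∣ n := (dvd_pow_self p hk.ne').trans hpk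
  have hsq {ε : ℤ} (hε : ε ≠ 0) {d : ℕ} (hd : d ∈ n.divisors.filter (fun d => μ d = ε)) :
      Squarefree d :=
    moebius_ne_zero_iff_squarefree.mp ((Finset.mem_filter.mp hd).2 ▸ hε)
  calc ∏ d ∈ n.divisors.filter (fun d => μ d = -1), a (n / d)
      = ∏ d ∈ n.divisors.filter (fun d => μ d = 1), a (n / togglePrime p d) := by
        refine (Finset.prod_nbij' (togglePrime p) (togglePrime p)
          (fun d hd => togglePrime_mem_divisors_filter_moebius hp hpn one_ne_zero hd)
          (fun d hd => by
            simpa using togglePrime_mem_divisors_filter_moebius hp hpn (by norm_num) hd)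
          (fun d hd => togglePrime_togglePrime hp (hsq one_ne_zero hd))
          (fun d hd => togglePrime_togglePrime hp (hsq (by norm_num) hd))
          (fun _ _ => rfl)).symm
    _ ≡ ∏ d ∈ n.divisors.filter (fun d => μ d = 1), a (n / d) [ZMOD p ^ k] :=
        Int.ModEq.prod fun d hd => hG.modEq_div_togglePrime hp hk hn hpk
          (Nat.dvd_of_mem_divisors (Finset.mem_filter.mp hd).1) (hsq one_ne_zero hd)

end IsGaussSequence

theorem stmt1 (a : ℕ → ℤ)
    (hG : ∀ p r m : ℕ, p.Prime → 1 ≤ r → 1 ≤ m →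
      (p : ℤ) ^ r ∣ a (p ^ r * m) - a (p ^ (r - 1) * m)) :
    ∀ n : ℕ, 1 ≤ n →
      (n : ℤ) ∣
        (∏ d ∈ n.divisors.filter (fun d => moebius d = 1), a (n / d)) -
        (∏ d ∈ n.divisors.filter (fun d => moebius d = -1), a (n / d)) := by
  intro n hn
  rw [Int.natCast_dvd, Nat.dvd_iff_prime_pow_dvd_dvd]
  intro p k hp hpk
  rcases k.eq_zero_or_pos with rfl | hk
  · simp
  · have h := (IsGaussSequence.prod_moebius_modEq hG hp hk (by omega) hpk).dvd
    exact Int.natCast_dvd.mp (by exact_mod_cast h)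
end

section
/- An integer sequence (a_n) satisfies ∑_{d∣n} μ(d) a_{n/d} ≡ 0 (mod n) for all n ≥ 1 if and only if there exists an integer sequence (g_n) such that a_n = ∑_{d∣n} d·g_d for all n ≥ 1. -/
/-!
By Möbius inversion, `a n = ∑_{d ∣ n} d g_d` for all `n` says exactly that the Möbius transform
`∑_{d ∣ n} μ(d) a_{n/d}` equals `n g_n`; so such `g` exists iff every `n` divides the transform,
and then `g_n` is the quotient.
-/

open ArithmeticFunction

theorem sum_divisors_eq_iff_sum_moebius_mul_div_eq {R : Type*} [NonAssocRing R] {f a : ℕ → R} :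
    (∀ n > 0, ∑ d ∈ n.divisors, f d = a n) ↔
      ∀ n > 0, ∑ d ∈ n.divisors, (moebius d : R) * a (n / d) = f n := by
  rw [sum_eq_iff_sum_mul_moebius_eq]
  refine forall_congr' fun n => imp_congr_right fun _ => ?_
  rw [Nat.sum_divisorsAntidiagonal (f := fun d e => (moebius d : R) * a e)]

theorem sum_divisors_mul_eq_iff_sum_moebius_mul_div_eq {a g : ℕ → ℤ} :
    (∀ n : ℕ, 1 ≤ n → a n = ∑ d ∈ n.divisors, (d : ℤ) * g d) ↔
      ∀ n > 0, ∑ d ∈ n.divisors, moebius d * a (n / d) = n * g n := by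
  have h := sum_divisors_eq_iff_sum_moebius_mul_div_eq (f := fun d : ℕ => (d : ℤ) * g d) (a := a)
  simp only [Int.cast_id] at h
  rw [← h]
  exact forall_congr' fun n => imp_congr_right fun _ => eq_comm

theorem stmt2 (a : ℕ → ℤ) :
    (∀ n : ℕ, 1 ≤ n → (n : ℤ) ∣ ∑ d ∈ n.divisors, moebius d * a (n / d)) ↔
    ∃ g : ℕ → ℤ, ∀ n : ℕ, 1 ≤ n → a n = ∑ d ∈ n.divisors, (d : ℤ) * g d := by
  simp only [sum_divisors_mul_eq_iff_sum_moebius_mul_div_eq]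
  constructor
  · intro hdvd
    exact ⟨fun n => (∑ d ∈ n.divisors, moebius d * a (n / d)) / n,
      fun n hn => (Int.mul_ediv_cancel' (hdvd n hn)).symm⟩
  · rintro ⟨g, hg⟩ n hn
    exact ⟨g n, hg n hn⟩
end

section
/- If (a_n) is an Euler-Gauss sequence (i.e., ∏_{d∣n, μ(d)=1} a_{n/d} ≡ ∏_{d∣n, μ(d)=-1} a_{n/d} (mod n) for all n ≥ 1) and gcd(a_n, n) = 1 for all n ≥ 1, then (a_n) is a Gauss sequence, i.e., ∑_{d∣n} μ(d) a_{n/d} ≡ 0 (mod n) for all n ≥ 1. -/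
/-!
Coprimality forces every `a m` to be `±1`. If a prime `q` divided `a m`, then `q ∤ m`, and the
Euler-Gauss congruence at `q m` passes `q` from the factor `a m = a (q m / q)` of the `μ = -1`
product to some factor `a (q m / d)` of the `μ = 1` product; either `q ∣ q m / d`, against
coprimality, or `d = q e` with `e > 1` and `q m / d = m / e < m`, which allows a descent.
For `n ≥ 3` the two products are then units of `ℤ` congruent modulo `n`, hence equal: the
multiplicative Möbius transform of `a` in `ℤˣ` is trivial beyond `2`. By Möbius inversion `a n`
only depends on the parity of `n`, and then the additive Möbius transform `∑ μ d • a (n / d)`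
vanishes for `n ≥ 3` as well.
-/

open ArithmeticFunction Finset
open scoped ArithmeticFunction.Moebius

section CommGroup

variable {G : Type*} [CommGroup G]

@[to_additive]
theorem prod_divisors_eq_of_eq_one_of_three_le {F : ℕ → G} (hF : ∀ d, 3 ≤ d → F d = 1)
    {n : ℕ} (hn : 0 < n) :
    ∏ d ∈ n.divisors, F d = if 2 ∣ n then F 1 * F 2 else F 1 := by
  have hF' : ∀ d ∈ n.divisors,
      F d = (if d = 1 then F 1 else 1) * (if d = 2 then F 2 else 1) := by
    intro d hd
    have hd0 := Nat.pos_of_mem_divisors hd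
    obtain rfl | rfl | hd3 : d = 1 ∨ d = 2 ∨ 3 ≤ d := by omega
    · simp
    · simp
    · rw [hF d hd3, if_neg (by omega), if_neg (by omega), mul_one]
  rw [prod_congr rfl hF', prod_mul_distrib, prod_ite_eq', prod_ite_eq',
    if_pos (Nat.one_mem_divisors.2 hn.ne')]
  simp [Nat.mem_divisors, hn.ne', apply_ite (F 1 * ·)]

theorem sum_divisors_zsmul_moebius_eq_iff {A : Type*} [AddCommGroup A] {f F : ℕ → A} :
    (∀ n > 0, ∑ d ∈ n.divisors, F d = f n) ↔
      ∀ n > 0, ∑ d ∈ n.divisors, μ d • f (n / d) = F n := by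
  simp_rw [← Nat.sum_divisorsAntidiagonal fun d e => μ d • f e]
  exact sum_eq_iff_sum_smul_moebius_eq

@[to_additive existing]
theorem prod_divisors_zpow_moebius_eq_iff {f F : ℕ → G} :
    (∀ n > 0, ∏ d ∈ n.divisors, F d = f n) ↔
      ∀ n > 0, ∏ d ∈ n.divisors, f (n / d) ^ μ d = F n := by
  simp_rw [← Nat.prod_divisorsAntidiagonal fun d e => f e ^ μ d]
  exact prod_eq_iff_prod_pow_moebius_eq

@[to_additive]
theorem prod_divisors_zpow_moebius_eq_one_iff (f : ℕ → G) :
    (∀ n ≥ 3, ∏ d ∈ n.divisors, f (n / d) ^ μ d = 1) ↔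
      ∀ n > 0, f n = if 2 ∣ n then f 2 else f 1 := by
  constructor
  · intro h
    have hf : ∀ n > 0, ∏ m ∈ n.divisors, ∏ d ∈ m.divisors, f (m / d) ^ μ d = f n :=
      prod_divisors_zpow_moebius_eq_iff.2 fun _ _ => rfl
    have hF := fun n (hn : 0 < n) => prod_divisors_eq_of_eq_one_of_three_le h hn
    intro n hn
    rw [← hf n hn, hF n hn, ← hf 2 two_pos, ← hf 1 one_pos, hF 2 two_pos, hF 1 one_pos]
    simp
  · intro hf
    let F : ℕ → G := fun n => if n = 1 then f 1 else if n = 2 then f 2 / f 1 else 1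
    have hF : ∀ d, 3 ≤ d → F d = 1 := fun d hd => by
      simp only [F]
      rw [if_neg (by omega), if_neg (by omega)]
    have hFf : ∀ n > 0, ∏ d ∈ n.divisors, F d = f n := fun n hn => by
      rw [prod_divisors_eq_of_eq_one_of_three_le hF hn, hf n hn]
      simp [F]
    intro n hn
    rw [prod_divisors_zpow_moebius_eq_iff.1 hFf n (by omega), hF n hn]

@[to_additive]
theorem prod_divisors_zpow_moebius_eq_div (f : ℕ → G) (n : ℕ) :
    ∏ d ∈ n.divisors, f d ^ μ d =
      (∏ d ∈ n.divisors.filter (fun d => μ d = 1), f d) /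
        ∏ d ∈ n.divisors.filter (fun d => μ d = -1), f d := by
  rw [prod_filter, prod_filter, ← prod_div_distrib]
  refine prod_congr rfl fun d _ => ?_
  rcases moebius_eq_or d with h | h | h <;> simp [h]

end CommGroup

theorem Int.units_eq_of_dvd_sub {u v : ℤˣ} {n : ℕ} (hn : 3 ≤ n) (h : (n : ℤ) ∣ u - v) :
    u = v := by
  refine Units.ext <| sub_eq_zero.1 <| Int.eq_zero_of_abs_lt_dvd h ?_
  rcases Int.units_eq_one_or u with rfl | rfl <;> rcases Int.units_eq_one_or v with rfl | rfl <;>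
    norm_num <;> omega

def IsEulerGauss (a : ℕ → ℤ) : Prop :=
  ∀ n : ℕ, 1 ≤ n →
    (n : ℤ) ∣ (∏ d ∈ n.divisors.filter (fun d => μ d = 1), a (n / d)) -
      ∏ d ∈ n.divisors.filter (fun d => μ d = -1), a (n / d)

theorem Nat.div_pos_of_mem_divisors {n d : ℕ} (hd : d ∈ n.divisors) : 0 < n / d :=
  Nat.div_pos (Nat.divisor_le hd) (Nat.pos_of_mem_divisors hd)

theorem IsEulerGauss.prod_divisors_zpow_moebius_eq_one {a : ℕ → ℤ} (ha : IsEulerGauss a)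
    {u : ℕ → ℤˣ} (hu : ∀ k, 1 ≤ k → (u k : ℤ) = a k) {n : ℕ} (hn : 3 ≤ n) :
    ∏ d ∈ n.divisors, u (n / d) ^ μ d = 1 := by
  rw [prod_divisors_zpow_moebius_eq_div (fun d => u (n / d)), div_eq_one]
  refine Int.units_eq_of_dvd_sub hn ?_
  push_cast
  rw [prod_congr rfl fun d hd => hu _ (Nat.div_pos_of_mem_divisors (mem_filter.1 hd).1),
    prod_congr rfl fun d hd => hu _ (Nat.div_pos_of_mem_divisors (mem_filter.1 hd).1)]
  exact ha n (by omega)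

theorem Int.not_natCast_dvd_of_gcd_eq_one {x : ℤ} {k q : ℕ} (h : Int.gcd x k = 1) (hq : q.Prime)
    (hqk : q ∣ k) : ¬ (q : ℤ) ∣ x := fun hqx =>
  hq.not_dvd_one <| Int.natCast_dvd_natCast.1 <| by
    simpa [h] using Int.dvd_coe_gcd hqx (Int.natCast_dvd_natCast.2 hqk)

theorem IsEulerGauss.not_prime_dvd {a : ℕ → ℤ} (ha : IsEulerGauss a)
    (hcop : ∀ n : ℕ, 1 ≤ n → Int.gcd (a n) n = 1) {q : ℕ} (hq : q.Prime) :
    ∀ m, 1 ≤ m → ¬ (q : ℤ) ∣ a m := by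
  intro m
  induction m using Nat.strong_induction_on with
  | _ m IH =>
  intro hm hqa
  have hqm : ¬ q ∣ m := fun hqm => Int.not_natCast_dvd_of_gcd_eq_one (hcop m hm) hq hqm hqa
  have hqm_pos : 0 < q * m := Nat.mul_pos hq.pos hm
  have hQ : (q : ℤ) ∣
      ∏ d ∈ (q * m).divisors.filter (fun d => μ d = -1), a (q * m / d) := by
    refine dvd_trans ?_ (dvd_prod_of_mem _ (mem_filter.2
      ⟨Nat.mem_divisors.2 ⟨dvd_mul_right q m, hqm_pos.ne'⟩, moebius_apply_prime hq⟩))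
    rwa [Nat.mul_div_cancel_left m hq.pos]
  have hP : (q : ℤ) ∣ ∏ d ∈ (q * m).divisors.filter (fun d => μ d = 1), a (q * m / d) := by
    have hEG := (Int.natCast_dvd_natCast.2 (dvd_mul_right q m)).trans (ha (q * m) hqm_pos)
    simpa using hEG.add hQ
  obtain ⟨d, hd, hqd⟩ := (Nat.prime_iff_prime_int.1 hq).exists_mem_finset_dvd hP
  obtain ⟨hdqm, hμd⟩ := mem_filter.1 hd
  replace hdqm := Nat.dvd_of_mem_divisors hdqm
  by_cases hqd' : q ∣ d
  · obtain ⟨e, rfl⟩ := hqd'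
    have he1 : e ≠ 1 := by rintro rfl; simp [moebius_apply_prime hq] at hμd
    have hem : e ∣ m := Nat.dvd_of_mul_dvd_mul_left hq.pos hdqm
    have he0 : 0 < e := Nat.pos_of_dvd_of_pos hem hm
    rw [Nat.mul_div_mul_left m e hq.pos] at hqd
    exact IH (m / e) (Nat.div_lt_self hm (by omega)) (Nat.div_pos (Nat.le_of_dvd hm hem) he0) hqd
  · have hdm : d ∣ m := ((hq.coprime_iff_not_dvd.2 hqd').symm).dvd_of_dvd_mul_left hdqm
    have hmd : 0 < m / d := Nat.div_pos (Nat.le_of_dvd hm hdm) (Nat.pos_of_dvd_of_pos hdm hm)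
    rw [Nat.mul_div_assoc q hdm] at hqd
    exact Int.not_natCast_dvd_of_gcd_eq_one (hcop _ (Nat.mul_pos hq.pos hmd)) hq
      (dvd_mul_right q _) hqd

theorem IsEulerGauss.isUnit {a : ℕ → ℤ} (ha : IsEulerGauss a)
    (hcop : ∀ n : ℕ, 1 ≤ n → Int.gcd (a n) n = 1) (m : ℕ) (hm : 1 ≤ m) :
    IsUnit (a m) := by
  rw [Int.isUnit_iff_natAbs_eq]
  by_contra h
  obtain ⟨p, hp, hpa⟩ := Nat.exists_prime_and_dvd h
  exact ha.not_prime_dvd hcop hp m hm (Int.natCast_dvd.2 hpa)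

theorem stmt3 (a : ℕ → ℤ)
    (hEG : ∀ n : ℕ, 1 ≤ n →
      (n : ℤ) ∣
        (∏ d ∈ n.divisors.filter (fun d => moebius d = 1), a (n / d)) -
        (∏ d ∈ n.divisors.filter (fun d => moebius d = -1), a (n / d)))
    (hcop : ∀ n : ℕ, 1 ≤ n → Int.gcd (a n) n = 1) :
    ∀ n : ℕ, 1 ≤ n → (n : ℤ) ∣ ∑ d ∈ n.divisors, moebius d * a (n / d) := by
  have ha : IsEulerGauss a := hEG
  choose! u hu using ha.isUnit hcop
  have hu_parity := (prod_divisors_zpow_moebius_eq_one_iff u).1 fun n hn =>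
    ha.prod_divisors_zpow_moebius_eq_one hu hn
  have ha_parity : ∀ n > 0, a n = if 2 ∣ n then a 2 else a 1 := fun n hn => by
    rw [← hu n hn, hu_parity n hn, apply_ite Units.val, hu 1 le_rfl, hu 2 one_le_two]
  intro n hn
  obtain rfl | rfl | hn3 : n = 1 ∨ n = 2 ∨ 3 ≤ n := by omega
  · simp
  · rw [Nat.prime_two.sum_divisors, moebius_apply_prime Nat.prime_two, moebius_apply_one]
    rcases Int.isUnit_iff.1 (ha.isUnit hcop 1 le_rfl) with h1 | h1 <;>
      rcases Int.isUnit_iff.1 (ha.isUnit hcop 2 one_le_two) with h2 | h2 <;> simp [h1, h2]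
  · simp_rw [← smul_eq_mul]
    rw [(sum_divisors_zsmul_moebius_eq_zero_iff a).2 ha_parity n hn3]
    exact dvd_zero _
end

section
/- Let (a_n) be an integer sequence such that the sequence b_n = n·a_n is an Euler sequence, i.e., b_{p^r} ≡ b_{p^{r-1}} (mod p^r) for all primes p and r ≥ 1. Then (n·a_n) is an Euler-Gauss sequence: ∏_{d∣n, μ(d)=1} (n/d)·a_{n/d} ≡ ∏_{d∣n, μ(d)=-1} (n/d)·a_{n/d} (mod n) for all n ≥ 1. -/
open ArithmeticFunction

/-!
At a prime power `p ^ r` the only squarefree divisors are `1` and `p`, so the congruence is exactly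
the Euler condition. Otherwise `n` has two distinct prime factors `p` and `q`: the `μ = 1` product
contains the factor `n * a n` (from `d = 1`), and the `μ = -1` product contains
`(n / p) * (n / q) = n * (n / (p * q))`, so both products are multiples of `n`.
-/

namespace ArithmeticFunction

theorem moebius_prime_pow_eq_one_iff {p : ℕ} (hp : p.Prime) (i : ℕ) :
    moebius (p ^ i) = 1 ↔ i = 0 := by
  rcases eq_or_ne i 0 with rfl | hi
  · simp
  · rw [moebius_apply_prime_pow hp hi]
    split_ifs <;> simp [hi]

theorem moebius_prime_pow_eq_neg_one_iff {p : ℕ} (hp : p.Prime) (i : ℕ) :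
    moebius (p ^ i) = -1 ↔ i = 1 := by
  rcases eq_or_ne i 0 with rfl | hi
  · simp
  · rw [moebius_apply_prime_pow hp hi]
    split_ifs with h <;> simp [h]

theorem filter_divisors_prime_pow_moebius_eq_one {p : ℕ} (hp : p.Prime) (r : ℕ) :
    (p ^ r).divisors.filter (fun d => moebius d = 1) = {1} := by
  ext d
  simp only [Finset.mem_filter, Nat.mem_divisors_prime_pow hp, Finset.mem_singleton]
  constructor
  · rintro ⟨⟨i, -, rfl⟩, h⟩
    rw [(moebius_prime_pow_eq_one_iff hp i).mp h, pow_zero]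
  · rintro rfl
    exact ⟨⟨0, Nat.zero_le r, (pow_zero p).symm⟩, moebius_apply_one⟩

theorem filter_divisors_prime_pow_moebius_eq_neg_one {p r : ℕ} (hp : p.Prime) (hr : r ≠ 0) :
    (p ^ r).divisors.filter (fun d => moebius d = -1) = {p} := by
  ext d
  simp only [Finset.mem_filter, Nat.mem_divisors_prime_pow hp, Finset.mem_singleton]
  constructor
  · rintro ⟨⟨i, -, rfl⟩, h⟩
    rw [(moebius_prime_pow_eq_neg_one_iff hp i).mp h, pow_one]
  · rintro rfl
    exact ⟨⟨1, Nat.one_le_iff_ne_zero.mpr hr, (pow_one _).symm⟩, moebius_apply_prime hp⟩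

end ArithmeticFunction

namespace Nat

theorem exists_prime_ne_prime_dvd_of_not_isPrimePow {n : ℕ} (hn : 1 < n) (h : ¬IsPrimePow n) :
    ∃ p q, p.Prime ∧ q.Prime ∧ p ≠ q ∧ p ∣ n ∧ q ∣ n := by
  have hcard : 1 < n.primeFactors.card := by
    by_contra! hle
    interval_cases hc : n.primeFactors.card
    · rw [Finset.card_eq_zero, primeFactors_eq_empty] at hc
      omega
    · exact h (isPrimePow_iff_card_primeFactors_eq_one.mpr hc)
  obtain ⟨p, hp, q, hq, hpq⟩ := Finset.one_lt_card.mp hcard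
  exact ⟨p, q, prime_of_mem_primeFactors hp, prime_of_mem_primeFactors hq, hpq,
    dvd_of_mem_primeFactors hp, dvd_of_mem_primeFactors hq⟩

theorem div_mul_div_eq_mul_div_mul {n p q : ℕ} (hpq : p.Coprime q) (hp : p ∣ n) (hq : q ∣ n) :
    n / p * (n / q) = n * (n / (p * q)) := by
  rw [Nat.div_mul_div_comm hp hq, Nat.mul_div_assoc n (hpq.mul_dvd_of_dvd_of_dvd hp hq)]

end Nat

section
variable (a : ℕ → ℤ) {n : ℕ}

theorem dvd_prod_filter_moebius_eq_one (hn : n ≠ 0) :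
    (n : ℤ) ∣ ∏ d ∈ n.divisors.filter (fun d => moebius d = 1), ((n / d : ℕ) : ℤ) * a (n / d) := by
  have h1 : 1 ∈ n.divisors.filter (fun d => moebius d = 1) := by
    simp [hn]
  refine dvd_trans ?_ (Finset.dvd_prod_of_mem _ h1)
  rw [Nat.div_one]
  exact dvd_mul_right _ _

theorem dvd_prod_filter_moebius_eq_neg_one (hn : 1 < n) (h : ¬IsPrimePow n) :
    (n : ℤ) ∣
      ∏ d ∈ n.divisors.filter (fun d => moebius d = -1), ((n / d : ℕ) : ℤ) * a (n / d) := by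
  obtain ⟨p, q, hp, hq, hpq, hpn, hqn⟩ := Nat.exists_prime_ne_prime_dvd_of_not_isPrimePow hn h
  have hsub : {p, q} ⊆ n.divisors.filter (fun d => moebius d = -1) := by
    simp [Finset.insert_subset_iff, hpn, hqn, Nat.ne_zero_of_lt hn, moebius_apply_prime, hp, hq]
  have hpq_dvd : (n : ℤ) ∣ ((n / p : ℕ) : ℤ) * ((n / q : ℕ) : ℤ) := by
    rw [← Nat.cast_mul, Nat.div_mul_div_eq_mul_div_mul ((Nat.coprime_primes hp hq).mpr hpq) hpn hqn]
    exact Int.natCast_dvd_natCast.mpr (dvd_mul_right n _)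
  rw [← Finset.prod_sdiff hsub, Finset.prod_pair hpq, mul_mul_mul_comm ((n / p : ℕ) : ℤ)]
  exact (hpq_dvd.mul_right _).mul_left _

end

theorem stmt5 (a : ℕ → ℤ)
    (hE : ∀ p r : ℕ, p.Prime → 1 ≤ r →
      (p : ℤ) ^ r ∣ ((p ^ r : ℕ) : ℤ) * a (p ^ r) - ((p ^ (r - 1) : ℕ) : ℤ) * a (p ^ (r - 1))) :
    ∀ n : ℕ, 1 ≤ n →
      (n : ℤ) ∣
        (∏ d ∈ n.divisors.filter (fun d => moebius d = 1), ((n / d : ℕ) : ℤ) * a (n / d)) -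
        (∏ d ∈ n.divisors.filter (fun d => moebius d = -1), ((n / d : ℕ) : ℤ) * a (n / d)) := by
  intro n hn
  obtain rfl | hn := hn.eq_or_lt
  · exact one_dvd _
  by_cases hpp : IsPrimePow n
  · obtain ⟨p, r, hp, hr, rfl⟩ := hpp
    have hp := hp.nat_prime
    have hdiv : p ^ r / p = p ^ (r - 1) := by simpa using Nat.pow_div hr hp.pos
    rw [filter_divisors_prime_pow_moebius_eq_one hp,
      filter_divisors_prime_pow_moebius_eq_neg_one hp hr.ne', Finset.prod_singleton,
      Finset.prod_singleton, Nat.div_one, hdiv]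
    exact_mod_cast hE p r hp hr
  · exact dvd_sub (dvd_prod_filter_moebius_eq_one a (by omega))
      (dvd_prod_filter_moebius_eq_neg_one a hn hpp)
end

section
/- The smallest-prime-factor sequence, defined by s_1 = 0 and s_n = smallest prime factor of n for n > 1, is an Euler-Gauss sequence: for all n ≥ 1, ∏_{d∣n, μ(d)=1} s_{n/d} ≡ ∏_{d∣n, μ(d)=-1} s_{n/d} (mod n). -/
/-!
Write `n = p ^ k * m` with `p` the smallest prime factor of `n` and `p ∤ m`. The squarefree
divisors of `n` are the squarefree `e ∣ m` and the `p * e`, with `μ (p * e) = -μ e`. Every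
`n / e` is a multiple of `p` with no smaller prime factor, so `spf (n / e) = p`. If `k ≥ 2` the
same holds for `n / (p * e)` and the two products coincide. If `k = 1` then `n / (p * e) = m / e`,
and the difference for `n` is `p ^ a` times the negated difference for `m`, where `a ≥ 1` is the
common number of divisors of `m` with `μ = 1` and with `μ = -1` (they agree because
`∑ e ∈ m.divisors, μ e = 0` for `m > 1`); induction on `n` concludes.
-/

open ArithmeticFunction

/-- The smallest-prime-factor sequence, with `spf 1 = 0`. -/
def spf (n : ℕ) : ℕ := if n = 1 then 0 else n.minFac

open Finset
open scoped ArithmeticFunction.Moebius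

def eulerGaussProd {M : Type*} [CommMonoid M] (f : ℕ → M) (ε : ℤ) (n : ℕ) : M :=
  ∏ d ∈ n.divisors.filter (fun d => μ d = ε), f (n / d)

lemma spf_eq_minFac_of_dvd {n q : ℕ} (hn : n ≠ 1) (hqn : q ∣ n) (hq : n.minFac ∣ q) :
    spf q = n.minFac := by
  have hp := Nat.minFac_prime hn
  have hq1 : q ≠ 1 := by rintro rfl; exact hp.ne_one (Nat.dvd_one.mp hq)
  rw [spf, if_neg hq1]
  exact le_antisymm (Nat.minFac_le_of_dvd hp.two_le hq)
    (Nat.minFac_le_of_dvd (Nat.minFac_prime hq1).two_le (q.minFac_dvd.trans hqn))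

lemma moebius_prime_mul {p e : ℕ} (hp : p.Prime) (hpe : ¬ p ∣ e) : μ (p * e) = -μ e := by
  rw [isMultiplicative_moebius.map_mul_of_coprime (hp.coprime_iff_not_dvd.mpr hpe),
    moebius_apply_prime hp, neg_one_mul]

lemma card_filter_moebius_one_eq_neg_one {m : ℕ} (hm : m ≠ 1) :
    #(m.divisors.filter (fun d => μ d = 1)) = #(m.divisors.filter (fun d => μ d = -1)) := by
  have hsum : ∑ d ∈ m.divisors, μ d = 0 := by
    have h := congr_arg (· m) moebius_mul_coe_zeta
    simp only [coe_mul_zeta_apply, one_apply, hm, if_false] at h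
    exact h
  have hsplit (d : ℕ) : μ d = (if μ d = 1 then 1 else 0) - (if μ d = -1 then 1 else 0) := by
    rcases moebius_eq_or d with h | h | h <;> simp [h]
  rw [sum_congr rfl fun d _ => hsplit d, sum_sub_distrib, sum_boole, sum_boole,
    sub_eq_zero] at hsum
  exact_mod_cast hsum

lemma filter_moebius_divisors_prime_pow_mul {p k m : ℕ} (hp : p.Prime) (hk : k ≠ 0)
    (hpm : ¬ p ∣ m) {ε : ℤ} (hε : ε ≠ 0) :
    (p ^ k * m).divisors.filter (fun d => μ d = ε) =
      m.divisors.filter (fun d => μ d = ε) ∪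
        (m.divisors.filter (fun d => μ d = -ε)).image (p * ·) := by
  have hm : m ≠ 0 := by rintro rfl; exact hpm (dvd_zero p)
  have hn : p ^ k * m ≠ 0 := mul_ne_zero (pow_ne_zero _ hp.ne_zero) hm
  ext d
  simp only [mem_union, mem_image, mem_filter, Nat.mem_divisors, and_iff_left hm,
    and_iff_left hn]
  constructor
  · rintro ⟨hd, hμ⟩
    by_cases hpd : p ∣ d
    · obtain ⟨e, rfl⟩ := hpd
      have hsq : Squarefree (p * e) := moebius_ne_zero_iff_squarefree.mp (hμ ▸ hε)
      have hpe : ¬ p ∣ e := fun h =>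
        hp.one_lt.ne' (Nat.isUnit_iff.mp (hsq p (mul_dvd_mul_left p h)))
      refine Or.inr ⟨e, ⟨?_, by rw [← hμ, moebius_prime_mul hp hpe, neg_neg]⟩, rfl⟩
      exact ((hp.coprime_iff_not_dvd.mpr hpe).pow_left k).symm.dvd_of_dvd_mul_left
        ((dvd_mul_left e p).trans hd)
    · exact Or.inl
        ⟨((hp.coprime_iff_not_dvd.mpr hpd).pow_left k).symm.dvd_of_dvd_mul_left hd, hμ⟩
  · rintro (⟨hd, hμ⟩ | ⟨e, ⟨he, hμ⟩, rfl⟩)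
    · exact ⟨hd.trans (dvd_mul_left m _), hμ⟩
    · exact ⟨mul_dvd_mul (dvd_pow_self p hk) he,
        by rw [moebius_prime_mul hp fun h => hpm (h.trans he), hμ, neg_neg]⟩

lemma eulerGaussProd_prime_pow_mul {M : Type*} [CommMonoid M] (f : ℕ → M) {p k m : ℕ}
    (hp : p.Prime) (hk : k ≠ 0) (hpm : ¬ p ∣ m) {ε : ℤ} (hε : ε ≠ 0) :
    eulerGaussProd f ε (p ^ k * m) =
      (∏ e ∈ m.divisors.filter (fun d => μ d = ε), f (p ^ k * (m / e))) *
        ∏ e ∈ m.divisors.filter (fun d => μ d = -ε), f (p ^ (k - 1) * (m / e)) := by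
  have hdisj : Disjoint (m.divisors.filter (fun d => μ d = ε))
      ((m.divisors.filter (fun d => μ d = -ε)).image (p * ·)) := by
    simp only [disjoint_left, mem_image, mem_filter, Nat.mem_divisors]
    rintro _ ⟨⟨hd, -⟩, -⟩ ⟨e, -, rfl⟩
    exact hpm ((dvd_mul_right p e).trans hd)
  rw [eulerGaussProd, filter_moebius_divisors_prime_pow_mul hp hk hpm hε, prod_union hdisj,
    prod_image fun _ _ _ _ => Nat.eq_of_mul_eq_mul_left hp.pos]
  obtain ⟨j, rfl⟩ := Nat.exists_eq_add_one_of_ne_zero hk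
  congr 1 <;> refine prod_congr rfl fun e he => congr_arg f ?_
  · exact Nat.mul_div_assoc _ (Nat.dvd_of_mem_divisors (mem_filter.mp he).1)
  · rw [pow_succ', mul_assoc, Nat.mul_div_mul_left _ _ hp.pos, Nat.add_sub_cancel,
      Nat.mul_div_assoc _ (Nat.dvd_of_mem_divisors (mem_filter.mp he).1)]

lemma spf_prime_pow_mul_div {p k m j e : ℕ} (hn : p ^ k * m ≠ 1) (hmin : (p ^ k * m).minFac = p)
    (hj : j ≠ 0) (hjk : j ≤ k) (he : e ∣ m) : spf (p ^ j * (m / e)) = p := by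
  have h := spf_eq_minFac_of_dvd hn (mul_dvd_mul (pow_dvd_pow p hjk) (Nat.div_dvd_of_dvd he))
    (by rw [hmin]; exact dvd_mul_of_dvd_left (dvd_pow_self p hj) _)
  rwa [hmin] at h

lemma prod_spf_prime_pow_mul_div {p k m j : ℕ} (hn : p ^ k * m ≠ 1)
    (hmin : (p ^ k * m).minFac = p) (hj : j ≠ 0) (hjk : j ≤ k) (ε : ℤ) :
    ∏ e ∈ m.divisors.filter (fun d => μ d = ε), (spf (p ^ j * (m / e)) : ℤ) =
      (p : ℤ) ^ #(m.divisors.filter (fun d => μ d = ε)) :=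
  prod_eq_pow_card fun e he => by
    rw [spf_prime_pow_mul_div hn hmin hj hjk (Nat.dvd_of_mem_divisors (mem_filter.mp he).1)]

lemma eulerGaussProd_spf_prime_pow_mul {p k m : ℕ} (hn : p ^ k * m ≠ 1)
    (hmin : (p ^ k * m).minFac = p) (hpm : ¬ p ∣ m) (hk : k ≠ 0) {ε : ℤ} (hε : ε ≠ 0) :
    eulerGaussProd (fun q => (spf q : ℤ)) ε (p ^ k * m) =
      (p : ℤ) ^ #(m.divisors.filter (fun d => μ d = ε)) *
        ∏ e ∈ m.divisors.filter (fun d => μ d = -ε), (spf (p ^ (k - 1) * (m / e)) : ℤ) := by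
  rw [eulerGaussProd_prime_pow_mul _ (hmin ▸ Nat.minFac_prime hn) hk hpm hε,
    prod_spf_prime_pow_mul_div hn hmin hk le_rfl]

lemma eulerGaussProd_spf_eq_of_two_le {p k m : ℕ} (hn : p ^ k * m ≠ 1)
    (hmin : (p ^ k * m).minFac = p) (hpm : ¬ p ∣ m) (hk : 2 ≤ k) :
    eulerGaussProd (fun q => (spf q : ℤ)) 1 (p ^ k * m) =
      eulerGaussProd (fun q => (spf q : ℤ)) (-1) (p ^ k * m) := by
  rw [eulerGaussProd_spf_prime_pow_mul hn hmin hpm (by omega) one_ne_zero,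
    eulerGaussProd_spf_prime_pow_mul hn hmin hpm (by omega) (neg_ne_zero.mpr one_ne_zero),
    neg_neg, prod_spf_prime_pow_mul_div hn hmin (by omega) (by omega),
    prod_spf_prime_pow_mul_div hn hmin (by omega) (by omega), mul_comm]

lemma eulerGaussProd_spf_prime_mul {p m : ℕ} (hn : p * m ≠ 1) (hmin : (p * m).minFac = p)
    (hpm : ¬ p ∣ m) {ε : ℤ} (hε : ε ≠ 0) :
    eulerGaussProd (fun q => (spf q : ℤ)) ε (p * m) =
      (p : ℤ) ^ #(m.divisors.filter (fun d => μ d = ε)) *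
        eulerGaussProd (fun q => (spf q : ℤ)) (-ε) m := by
  simpa only [pow_one, Nat.sub_self, pow_zero, one_mul, eulerGaussProd] using
    eulerGaussProd_spf_prime_pow_mul (k := 1) (by rwa [pow_one]) (by rwa [pow_one]) hpm
      one_ne_zero hε

lemma exists_eq_minFac_pow_mul {n : ℕ} (hn : 1 < n) :
    ∃ p k m, (p ^ k * m).minFac = p ∧ k ≠ 0 ∧ ¬ p ∣ m ∧ p ^ k * m = n := by
  obtain ⟨k, m, hpm, hnm⟩ :=
    Nat.exists_eq_pow_mul_and_not_dvd (by omega : n ≠ 0) _ (Nat.minFac_prime hn.ne').ne_one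
  refine ⟨n.minFac, k, m, hnm ▸ rfl, ?_, hpm, hnm.symm⟩
  rintro rfl
  rw [pow_zero, one_mul] at hnm
  exact hpm (hnm ▸ Nat.minFac_dvd n)

theorem stmt10 :
    ∀ n : ℕ, 1 ≤ n →
      (n : ℤ) ∣
        (∏ d ∈ n.divisors.filter (fun d => moebius d = 1), (spf (n / d) : ℤ)) -
        (∏ d ∈ n.divisors.filter (fun d => moebius d = -1), (spf (n / d) : ℤ)) := by
  intro n hn
  induction n using Nat.strong_induction_on with
  | _ n ih =>
  change (n : ℤ) ∣ eulerGaussProd (fun q => (spf q : ℤ)) 1 n -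
    eulerGaussProd (fun q => (spf q : ℤ)) (-1) n
  obtain rfl | hn1 := hn.eq_or_lt
  · simp [eulerGaussProd, spf]
  obtain ⟨p, k, m, hmin, hk, hpm, rfl⟩ := exists_eq_minFac_pow_mul hn1
  obtain hk2 | rfl : 2 ≤ k ∨ k = 1 := by omega
  · rw [eulerGaussProd_spf_eq_of_two_le hn1.ne' hmin hpm hk2, sub_self]
    exact dvd_zero _
  rw [pow_one] at hn1 hmin ih ⊢
  rw [eulerGaussProd_spf_prime_mul hn1.ne' hmin hpm one_ne_zero,
    eulerGaussProd_spf_prime_mul hn1.ne' hmin hpm (neg_ne_zero.mpr one_ne_zero), neg_neg]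
  obtain rfl | hm1 := eq_or_ne m 1
  · simp [eulerGaussProd, spf, filter_singleton]
  have hp : p.Prime := hmin ▸ Nat.minFac_prime hn1.ne'
  have hm : 0 < m := Nat.pos_of_ne_zero fun h => hpm (h ▸ dvd_zero p)
  have hcard := card_filter_moebius_one_eq_neg_one hm1
  have hcard_pos : #(m.divisors.filter (fun d => μ d = 1)) ≠ 0 :=
    card_ne_zero_of_mem (mem_filter.mpr ⟨Nat.one_mem_divisors.mpr hm.ne', moebius_apply_one⟩)
  rw [hcard, ← mul_sub, Nat.cast_mul]
  exact mul_dvd_mul (dvd_pow_self _ (hcard ▸ hcard_pos))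
    (dvd_sub_comm.mp (ih m (lt_mul_of_one_lt_left hm hp.one_lt) hm))
end

section
/- The greatest-prime-factor sequence, defined by g_1 = 0 and g_n = largest prime factor of n for n > 1, is an Euler-Gauss sequence: for all n ≥ 1, ∏_{d∣n, μ(d)=1} g_{n/d} ≡ ∏_{d∣n, μ(d)=-1} g_{n/d} (mod n). -/
/-!
Let `p = gpf n`. If `p ^ 2 ∣ n`, then `p ∣ n / d` for every squarefree `d ∣ n`, so every factor
of both products is `p`, and the two products agree because `n ≠ 1` has as many squarefree
divisors with an even number of prime factors as with an odd one. Otherwise `n = p * m` with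
`p ∤ m`: a divisor `d ∣ m` contributes `gpf (p * m / d) = p`, while `p * d` flips the sign of `μ`
and contributes `gpf (m / d)`. Hence the difference for `n` is `-p ^ E` times the difference for
`m`, with `E ≥ 1`, and strong induction on `n` concludes (`m = 1` directly, since `gpf 1 = 0`).
-/

open ArithmeticFunction

/-- The greatest-prime-factor sequence, with `gpf 1 = 0`. -/
def gpf (n : ℕ) : ℕ := if n = 1 then 0 else n.primeFactors.sup _root_.id

open scoped ArithmeticFunction.Moebius
open Finset

theorem Nat.Coprime.prod_divisors_mul {M : Type*} [CommMonoid M] {m n : ℕ} (hmn : m.Coprime n)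
    (f : ℕ → M) : ∏ d ∈ (m * n).divisors, f d = ∏ a ∈ m.divisors, ∏ b ∈ n.divisors, f (a * b) := by
  rw [Nat.divisors_mul, Finset.mul_def, prod_image hmn.mul_injOn_divisors, prod_product]

namespace ArithmeticFunction

theorem sum_divisors_moebius_eq_zero {n : ℕ} (hn : n ≠ 1) : ∑ d ∈ n.divisors, μ d = 0 := by
  rw [← coe_mul_zeta_apply, moebius_mul_coe_zeta, one_apply_ne hn]

theorem card_divisors_filter_moebius_eq_one {n : ℕ} (hn : n ≠ 1) :
    #{d ∈ n.divisors | μ d = 1} = #{d ∈ n.divisors | μ d = -1} := by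
  have hsplit (d : ℕ) : μ d = (if μ d = 1 then 1 else 0) - (if μ d = -1 then 1 else 0) := by
    rcases moebius_eq_or d with h | h | h <;> simp [h]
  have := sum_divisors_moebius_eq_zero hn
  rw [sum_congr rfl fun d _ => hsplit d, sum_sub_distrib, sum_boole, sum_boole] at this
  exact_mod_cast sub_eq_zero.mp this

theorem moebius_prime_mul {p n : ℕ} (hp : p.Prime) (hpn : ¬ p ∣ n) : μ (p * n) = -μ n := by
  rw [isMultiplicative_moebius.map_mul_of_coprime (hp.coprime_iff_not_dvd.2 hpn),
    moebius_apply_prime hp, neg_one_mul]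

theorem prod_divisors_filter_moebius_prime_mul {M : Type*} [CommMonoid M] (f : ℕ → M) {p m : ℕ}
    (hp : p.Prime) (hpm : ¬ p ∣ m) (ε : ℤ) :
    ∏ d ∈ (p * m).divisors with μ d = ε, f (p * m / d) =
      (∏ d ∈ m.divisors with μ d = -ε, f (m / d)) *
        ∏ d ∈ m.divisors with μ d = ε, f (p * m / d) := by
  rw [prod_filter, prod_filter, prod_filter, (hp.coprime_iff_not_dvd.2 hpm).prod_divisors_mul,
    hp.prod_divisors, ← prod_mul_distrib, ← prod_mul_distrib]
  refine Finset.prod_congr rfl fun b hb => ?_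
  have hpb : ¬ p ∣ b := fun h => hpm (h.trans (Nat.dvd_of_mem_divisors hb))
  simp only [moebius_prime_mul hp hpb, neg_eq_iff_eq_neg, Nat.mul_div_mul_left _ _ hp.pos, one_mul]

end ArithmeticFunction

theorem Nat.Prime.dvd_div_of_sq_dvd {p n d : ℕ} (hp : p.Prime) (hn : p ^ 2 ∣ n) (hd : d ∣ n)
    (hsq : Squarefree d) : p ∣ n / d := by
  by_contra hpd
  have hsq_dvd : p ^ 2 ∣ d * (n / d) := by rwa [Nat.mul_div_cancel' hd]
  have : p * p ∣ d :=
    sq p ▸ ((hp.coprime_iff_not_dvd.2 hpd).pow_left 2).dvd_of_dvd_mul_right hsq_dvd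
  exact hp.one_lt.ne' (Nat.isUnit_iff.mp (hsq p this))

theorem le_gpf {n q : ℕ} (hq : q ∈ n.primeFactors) : q ≤ gpf n := by
  have hn : n ≠ 1 := by rintro rfl; simp at hq
  rw [gpf, if_neg hn]
  exact le_sup (f := _root_.id) hq

theorem gpf_mem_primeFactors {n : ℕ} (hn : 2 ≤ n) : gpf n ∈ n.primeFactors := by
  have hne : n.primeFactors.Nonempty := Nat.nonempty_primeFactors.2 hn
  rw [gpf, if_neg (by omega), ← sup'_eq_sup hne]
  exact n.primeFactors.max'_mem hne

theorem gpf_eq_of_dvd {p k : ℕ} (hp : p.Prime) (hk : k ≠ 0) (hpk : p ∣ k)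
    (hle : ∀ q ∈ k.primeFactors, q ≤ p) : gpf k = p := by
  have hk1 : k ≠ 1 := by rintro rfl; exact hp.ne_one (Nat.dvd_one.mp hpk)
  exact le_antisymm (by rw [gpf, if_neg hk1]; exact Finset.sup_le hle)
    (le_gpf (Nat.mem_primeFactors.2 ⟨hp, hpk, hk⟩))

theorem gpf_div_of_gpf_dvd {n d : ℕ} (hn : 2 ≤ n) (hd : d ∣ n) (h : gpf n ∣ n / d) :
    gpf (n / d) = gpf n :=
  gpf_eq_of_dvd (Nat.prime_of_mem_primeFactors (gpf_mem_primeFactors hn))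
    (Nat.div_ne_zero_iff_of_dvd hd |>.2 ⟨by omega, ne_zero_of_dvd_ne_zero (by omega) hd⟩) h
    fun _ hq => le_gpf (Nat.primeFactors_mono (Nat.div_dvd_of_dvd hd) (by omega) hq)

theorem prod_divisors_filter_moebius_gpf_of_sq_dvd {n : ℕ} (hn : 2 ≤ n) (hsq : gpf n ^ 2 ∣ n)
    {ε : ℤ} (hε : ε ≠ 0) :
    ∏ d ∈ n.divisors with μ d = ε, (gpf (n / d) : ℤ) =
      (gpf n : ℤ) ^ #{d ∈ n.divisors | μ d = ε} := by
  rw [← prod_const]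
  refine Finset.prod_congr rfl fun d hd => ?_
  obtain ⟨hdn, hμ⟩ := mem_filter.1 hd
  have hd : d ∣ n := Nat.dvd_of_mem_divisors hdn
  have hsqf : Squarefree d := moebius_ne_zero_iff_squarefree.1 (hμ ▸ hε)
  have hp := Nat.prime_of_mem_primeFactors (gpf_mem_primeFactors hn)
  exact_mod_cast gpf_div_of_gpf_dvd hn hd (hp.dvd_div_of_sq_dvd hsq hd hsqf)

theorem prod_divisors_filter_moebius_gpf_prime_mul {p m : ℕ} (hp : p.Prime) (hgpf : gpf (p * m) = p)
    (hpm : ¬ p ∣ m) (ε : ℤ) :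
    ∏ d ∈ (p * m).divisors with μ d = ε, (gpf (p * m / d) : ℤ) =
      (∏ d ∈ m.divisors with μ d = -ε, (gpf (m / d) : ℤ)) *
        (p : ℤ) ^ #{d ∈ m.divisors | μ d = ε} := by
  rw [prod_divisors_filter_moebius_prime_mul (fun k => (gpf k : ℤ)) hp hpm, ← prod_const]
  congr 1
  refine Finset.prod_congr rfl fun d hd => ?_
  obtain ⟨hdm, hm⟩ := Nat.mem_divisors.1 (mem_filter.1 hd).1
  have hpmd : gpf (p * m) ∣ p * m / d := by
    rw [hgpf, Nat.mul_div_assoc p hdm]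
    exact dvd_mul_right p _
  have h2 : 2 ≤ p * m := le_mul_of_le_of_one_le hp.two_le (Nat.one_le_iff_ne_zero.2 hm)
  exact_mod_cast (gpf_div_of_gpf_dvd h2 (hdm.mul_left p) hpmd).trans hgpf

theorem stmt11 :
    ∀ n : ℕ, 1 ≤ n →
      (n : ℤ) ∣
        (∏ d ∈ n.divisors.filter (fun d => moebius d = 1), (gpf (n / d) : ℤ)) -
        (∏ d ∈ n.divisors.filter (fun d => moebius d = -1), (gpf (n / d) : ℤ)) := by
  intro n
  induction n using Nat.strong_induction_on with
  | _ n ih =>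
  intro hn
  obtain rfl | hn2 : n = 1 ∨ 2 ≤ n := by omega
  · simp
  have hp := Nat.prime_of_mem_primeFactors (gpf_mem_primeFactors hn2)
  by_cases hsq : gpf n ^ 2 ∣ n
  · rw [prod_divisors_filter_moebius_gpf_of_sq_dvd hn2 hsq one_ne_zero,
      prod_divisors_filter_moebius_gpf_of_sq_dvd hn2 hsq (by norm_num),
      card_divisors_filter_moebius_eq_one (by omega), sub_self]
    exact dvd_zero _
  obtain ⟨m, hm⟩ := Nat.dvd_of_mem_primeFactors (gpf_mem_primeFactors hn2)
  set p := gpf n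
  have hpm : ¬ p ∣ m := fun h => hsq (hm ▸ sq p ▸ mul_dvd_mul_left p h)
  have hm0 : m ≠ 0 := by rintro rfl; omega
  have hgpf : gpf (p * m) = p := hm ▸ rfl
  rw [hm, prod_divisors_filter_moebius_gpf_prime_mul hp hgpf hpm,
    prod_divisors_filter_moebius_gpf_prime_mul hp hgpf hpm, neg_neg]
  obtain rfl | hm1 := eq_or_ne m 1
  · simp [filter_singleton, gpf]
  rw [← card_divisors_filter_moebius_eq_one hm1, ← sub_mul, Nat.cast_mul, mul_comm (p : ℤ)]
  have hone : 1 ∈ {d ∈ m.divisors | μ d = 1} :=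
    mem_filter.2 ⟨Nat.one_mem_divisors.2 hm0, moebius_apply_one⟩
  have hmn : m < n := hm ▸ lt_mul_left (Nat.pos_of_ne_zero hm0) hp.one_lt
  exact mul_dvd_mul (dvd_sub_comm.1 (ih m hmn (by omega)))
    (dvd_pow_self _ (card_ne_zero_of_mem hone))
end

section
/- Alladi's duality for the identity function: with s_1 = g_1 = 0, s_n = smallest prime factor of n and g_n = greatest prime factor of n for n > 1, we have s_n = -∑_{d∣n} μ(d) g_d and g_n = -∑_{d∣n} μ(d) s_d for all n ≥ 1. -/
open ArithmeticFunction

/-!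
Only squarefree divisors contribute, and these are the products over subsets `s` of the set `P`
of prime factors of `n`, with `μ = (-1) ^ #s`. So both sums are alternating sums over `s ⊆ P` of
a function of `max s` (resp. `min s`). Inserting a new largest element `a` into `P` adds
`-F {a} * ∑ t ⊆ P, (-1) ^ #t`, which vanishes unless `P` was empty; hence the alternating sum of
`max s` is `-min P`, and dually the alternating sum of `min s` is `-max P`.
-/

open Finset
open scoped ArithmeticFunction.Moebius

namespace Finset

variable {α M : Type*} [LinearOrder α] [AddCommGroup M]

theorem sum_powerset_neg_one_pow_card_smul_of_eq_max {F : Finset α → M}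
    (hF : ∀ a s, (∀ x ∈ s, x < a) → F (insert a s) = F {a}) {P : Finset α} (hP : P.Nonempty) :
    ∑ s ∈ P.powerset, (-1 : ℤ) ^ #s • F s = F ∅ - F {P.min' hP} := by
  induction P using Finset.induction_on_max with
  | empty => exact absurd hP not_nonempty_empty
  | insert a s hlt ih =>
    have has : a ∉ s := fun h => (hlt a h).false
    have hnew : ∑ t ∈ s.powerset, (-1 : ℤ) ^ #(insert a t) • F (insert a t) =
        -(∑ t ∈ s.powerset, (-1 : ℤ) ^ #t) • F {a} := by
      rw [neg_smul, sum_smul, ← sum_neg_distrib]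
      refine sum_congr rfl fun t ht => ?_
      have hts := mem_powerset.1 ht
      rw [card_insert_of_notMem (fun h => has (hts h)), pow_succ, mul_neg_one, neg_smul,
        hF a t fun x hx => hlt x (hts hx)]
    rw [sum_powerset_insert has, hnew]
    rcases s.eq_empty_or_nonempty with rfl | hs
    · simp [sub_eq_add_neg]
    · rw [sum_powerset_neg_one_pow_card_of_nonempty hs, ih hs, min'_insert _ _ hs,
        min_eq_right (hlt _ (min'_mem s hs)).le]
      simp

theorem sum_powerset_neg_one_pow_card_smul_of_eq_min {F : Finset α → M}
    (hF : ∀ a s, (∀ x ∈ s, a < x) → F (insert a s) = F {a}) {P : Finset α} (hP : P.Nonempty) :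
    ∑ s ∈ P.powerset, (-1 : ℤ) ^ #s • F s = F ∅ - F {P.max' hP} :=
  sum_powerset_neg_one_pow_card_smul_of_eq_max (α := αᵒᵈ) hF hP

end Finset

namespace Nat

theorem sum_divisors_moebius_smul_eq_sum_powerset {M : Type*} [AddCommGroup M] {n : ℕ}
    (hn : n ≠ 0) (f : ℕ → M) :
    ∑ d ∈ n.divisors, μ d • f d =
      ∑ s ∈ n.primeFactors.powerset, (-1 : ℤ) ^ #s • f (∏ p ∈ s, p) := by
  rw [← sum_filter_of_ne fun d _ h => by_contra fun hsq => h (by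
      rw [moebius_eq_zero_of_not_squarefree hsq, zero_smul]),
    sum_divisors_filter_squarefree hn, factors_eq, List.toFinset_coe, toFinset_factors]
  refine sum_congr rfl fun s hsP => ?_
  have hs : ∀ p ∈ s, p.Prime := fun p hp => prime_of_mem_primeFactors (mem_powerset.1 hsP hp)
  rw [s.prod_val, Function.id_def, isMultiplicative_moebius.map_prod_of_prime s hs,
    prod_congr rfl fun p hp => moebius_apply_prime (hs p hp), prod_const]

theorem gpf_eq_sup_primeFactors (n : ℕ) : gpf n = n.primeFactors.sup id := by
  unfold gpf
  split_ifs with h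
  · simp [h]
  · rfl

theorem spf_eq_untop₀_min_primeFactors {n : ℕ} (hn : n ≠ 0) :
    spf n = n.primeFactors.min.untop₀ := by
  unfold spf
  split_ifs with h
  · simp [h]
  · have hmem : n.minFac ∈ n.primeFactors :=
      mem_primeFactors.2 ⟨minFac_prime h, minFac_dvd n, hn⟩
    have hmin : n.primeFactors.min = n.minFac :=
      le_antisymm (min_le hmem) (Finset.le_min fun p hp => WithTop.coe_le_coe.2
        (minFac_le_of_dvd (prime_of_mem_primeFactors hp).two_le (dvd_of_mem_primeFactors hp)))
    rw [hmin]
    rfl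

theorem gpf_prod_primes {s : Finset ℕ} (hs : ∀ p ∈ s, p.Prime) :
    gpf (∏ p ∈ s, p) = s.sup id := by
  rw [gpf_eq_sup_primeFactors, primeFactors_prod hs]

theorem spf_prod_primes {s : Finset ℕ} (hs : ∀ p ∈ s, p.Prime) :
    spf (∏ p ∈ s, p) = s.min.untop₀ := by
  rw [spf_eq_untop₀_min_primeFactors (prod_ne_zero_iff.2 fun p hp => (hs p hp).ne_zero),
    primeFactors_prod hs]

theorem sum_divisors_moebius_mul_gpf {n : ℕ} (hn : n ≠ 0) :
    ∑ d ∈ n.divisors, μ d * (gpf d : ℤ) = -spf n := by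
  rcases eq_or_ne n 1 with rfl | hn1
  · simp [spf, gpf]
  have hP : n.primeFactors.Nonempty := nonempty_primeFactors.2 (by omega)
  have hF : ∀ a (s : Finset ℕ), (∀ x ∈ s, x < a) →
      (((insert a s).sup id : ℕ) : ℤ) = (({a} : Finset ℕ).sup id : ℕ) := by
    intro a s hlt
    rw [sup_insert, sup_singleton, id,
      max_eq_left (Finset.sup_le (f := id) fun x hx => (hlt x hx).le)]
  have hsum := sum_powerset_neg_one_pow_card_smul_of_eq_max
    (F := fun s : Finset ℕ => ((s.sup id : ℕ) : ℤ)) hF hP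
  have hsubsets := sum_divisors_moebius_smul_eq_sum_powerset hn fun d => (gpf d : ℤ)
  simp only [smul_eq_mul] at hsum hsubsets
  rw [hsubsets, sum_congr rfl fun s hs => by
    rw [gpf_prod_primes fun p hp => prime_of_mem_primeFactors (mem_powerset.1 hs hp)], hsum,
    spf_eq_untop₀_min_primeFactors hn, ← coe_min' hP]
  simp

theorem sum_divisors_moebius_mul_spf {n : ℕ} (hn : n ≠ 0) :
    ∑ d ∈ n.divisors, μ d * (spf d : ℤ) = -gpf n := by
  rcases eq_or_ne n 1 with rfl | hn1
  · simp [spf, gpf]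
  have hP : n.primeFactors.Nonempty := nonempty_primeFactors.2 (by omega)
  have hF : ∀ a (s : Finset ℕ), (∀ x ∈ s, a < x) →
      (((insert a s).min.untop₀ : ℕ) : ℤ) = (({a} : Finset ℕ).min.untop₀ : ℕ) := by
    intro a s hlt
    rw [min_insert, min_singleton,
      min_eq_left (Finset.le_min fun x hx => WithTop.coe_le_coe.2 (hlt x hx).le)]
  have hsum := sum_powerset_neg_one_pow_card_smul_of_eq_min
    (F := fun s : Finset ℕ => ((s.min.untop₀ : ℕ) : ℤ)) hF hP
  have hsubsets := sum_divisors_moebius_smul_eq_sum_powerset hn fun d => (spf d : ℤ)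
  simp only [smul_eq_mul] at hsum hsubsets
  rw [hsubsets, sum_congr rfl fun s hs => by
    rw [spf_prod_primes fun p hp => prime_of_mem_primeFactors (mem_powerset.1 hs hp)], hsum,
    gpf_eq_sup_primeFactors, ← sup'_eq_sup hP, ← max'_eq_sup']
  simp

end Nat

theorem stmt12 :
    ∀ n : ℕ, 1 ≤ n →
      (spf n : ℤ) = -∑ d ∈ n.divisors, moebius d * (gpf d : ℤ) ∧
      (gpf n : ℤ) = -∑ d ∈ n.divisors, moebius d * (spf d : ℤ) := by
  intro n hn
  rw [Nat.sum_divisors_moebius_mul_gpf (by omega), Nat.sum_divisors_moebius_mul_spf (by omega),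
    neg_neg, neg_neg]
  exact ⟨rfl, rfl⟩
end

section
/- For a squarefree integer n = p_1 p_2 ⋯ p_r with primes p_1 < p_2 < ⋯ < p_r and r ≥ 2, the Möbius-weighted sum of greatest prime factors satisfies ∑_{d∣n} μ(d) g_{n/d} = (-1)^{r-1} p_1, where g_1 = 0 and g_m is the greatest prime factor of m for m > 1. In particular, n does not divide this sum, so the greatest-prime-factor sequence fails the Gauss congruence at every squarefree n with at least two prime factors. -/
/-!
For squarefree `n` the divisors are the products `∏ t` over subsets `t` of the prime factors,
`μ (∏ t) = (-1) ^ #t`, `gpf (∏ t) = max t`, and `μ (n / d) = μ n * μ d`. Hence the sum equals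
`μ n * ∑_{t} (-1) ^ #t * max t`. Inducting on the largest element `a`, the subsets containing `a`
all have maximum `a` and their signs cancel; what survives is minus the least prime factor.
As `n` is not prime, `0 < n.minFac < n`, so `n` does not divide it.
-/

open ArithmeticFunction

open Finset
open scoped ArithmeticFunction.Moebius

theorem Finset.sum_powerset_neg_one_pow_card_mul_sup {α R : Type*} [LinearOrder α] [OrderBot α]
    [CommRing R] (f : α → R) (s : Finset α) (hs : s.Nonempty) :
    ∑ t ∈ s.powerset, (-1) ^ #t * f (t.sup id) = f ⊥ - f (s.min' hs) := by
  revert hs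
  refine Finset.induction_on_max s (fun hs => absurd hs not_nonempty_empty) ?_
  intro a s hlt ih hs
  rcases s.eq_empty_or_nonempty with rfl | hs'
  · rw [sum_powerset_insert (notMem_empty a)]
    simp [sub_eq_add_neg]
  have hsup : ∀ t ∈ s.powerset, (insert a t).sup id = a := fun t ht => by
    rw [sup_insert]
    exact sup_eq_left.mpr (Finset.sup_le fun x hx => (hlt x (mem_powerset.mp ht hx)).le)
  have hmin : (insert a s).min' hs = s.min' hs' :=
    (min'_insert a s hs').trans (min_eq_right (hlt _ (s.min'_mem hs')).le)
  have ha : a ∉ s := fun h => lt_irrefl a (hlt a h)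
  rw [sum_powerset_insert ha, ih hs', hmin]
  calc f ⊥ - f (s.min' hs') + ∑ t ∈ s.powerset, (-1) ^ #(insert a t) * f ((insert a t).sup id)
      = f ⊥ - f (s.min' hs') - f a * ∑ t ∈ s.powerset, (-1) ^ #t := by
        rw [sub_eq_add_neg _ (f a * _), mul_sum, ← sum_neg_distrib]
        refine congrArg _ (sum_congr rfl fun t ht => ?_)
        rw [card_insert_of_notMem fun h => ha (mem_powerset.mp ht h), hsup t ht, pow_succ]
        ring
    _ = f ⊥ - f (s.min' hs') := by
        have hsum : ∑ t ∈ s.powerset, (-1 : R) ^ #t = 0 := by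
          simpa using congrArg (Int.cast (R := R)) (sum_powerset_neg_one_pow_card_of_nonempty hs')
        rw [hsum, mul_zero, sub_zero]

theorem Nat.sum_divisors_eq_sum_powerset_primeFactors {M : Type*} [AddCommMonoid M] {n : ℕ}
    (hn : Squarefree n) (f : ℕ → M) :
    ∑ d ∈ n.divisors, f d = ∑ t ∈ n.primeFactors.powerset, f (∏ p ∈ t, p) := by
  rw [← Nat.divisors_filter_squarefree_of_squarefree hn,
    Nat.sum_divisors_filter_squarefree hn.ne_zero, Nat.factors_eq]
  simp

theorem ArithmeticFunction.moebius_prod_primes {s : Finset ℕ} (hs : ∀ p ∈ s, p.Prime) :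
    μ (∏ p ∈ s, p) = (-1) ^ #s := by
  rw [isMultiplicative_moebius.map_prod_of_prime s hs,
    prod_congr rfl fun p hp => moebius_apply_prime (hs p hp), prod_const]

theorem ArithmeticFunction.moebius_div_of_squarefree {n d : ℕ} (hn : Squarefree n) (hd : d ∣ n) :
    μ (n / d) = μ n * μ d := by
  have hmul : d * (n / d) = n := Nat.mul_div_cancel' hd
  have hcop : d.Coprime (n / d) := Nat.coprime_of_squarefree_mul (hmul.symm ▸ hn)
  have hsq : μ d ^ 2 = 1 := moebius_sq_eq_one_of_squarefree (hn.squarefree_of_dvd hd)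
  calc μ (n / d) = μ d ^ 2 * μ (n / d) := by rw [hsq, one_mul]
    _ = μ (d * (n / d)) * μ d := by rw [isMultiplicative_moebius.map_mul_of_coprime hcop]; ring
    _ = μ n * μ d := by rw [hmul]

theorem Nat.min'_primeFactors {n : ℕ} (h : n.primeFactors.Nonempty) :
    n.primeFactors.min' h = n.minFac := by
  have hn1 : n ≠ 1 := by rintro rfl; simp at h
  have hn0 : n ≠ 0 := by rintro rfl; simp at h
  have hmin := n.primeFactors.min'_mem h
  refine le_antisymm (min'_le _ _ ?_) ?_
  · exact Nat.mem_primeFactors.mpr ⟨Nat.minFac_prime hn1, Nat.minFac_dvd n, hn0⟩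
  · exact Nat.minFac_le_of_dvd (Nat.prime_of_mem_primeFactors hmin).two_le
      (Nat.dvd_of_mem_primeFactors hmin)

theorem gpf_prod_primes {s : Finset ℕ} (hs : ∀ p ∈ s, p.Prime) :
    gpf (∏ p ∈ s, p) = s.sup id := by
  rcases s.eq_empty_or_nonempty with rfl | hne
  · simp [gpf]
  · have hprod : (∏ p ∈ s, p) ≠ 1 := fun h => by
      simpa [h, hne.ne_empty.symm] using Nat.primeFactors_prod hs
    rw [gpf, if_neg hprod, Nat.primeFactors_prod hs]

theorem sum_moebius_mul_gpf {n : ℕ} (hn : Squarefree n) (h1 : n ≠ 1) :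
    ∑ d ∈ n.divisors, μ d * (gpf d : ℤ) = -n.minFac := by
  have hne : n.primeFactors.Nonempty := Nat.nonempty_primeFactors.mpr
    (lt_of_le_of_ne (Nat.one_le_iff_ne_zero.mpr hn.ne_zero) (Ne.symm h1))
  have hprime : ∀ t ∈ n.primeFactors.powerset, ∀ p ∈ t, p.Prime := fun t ht p hp =>
    Nat.prime_of_mem_primeFactors (mem_powerset.mp ht hp)
  rw [Nat.sum_divisors_eq_sum_powerset_primeFactors hn,
    sum_congr rfl fun t ht => by
      rw [moebius_prod_primes (hprime t ht), gpf_prod_primes (hprime t ht)],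
    sum_powerset_neg_one_pow_card_mul_sup _ _ hne, Nat.min'_primeFactors]
  simp

theorem sum_moebius_mul_gpf_div {n : ℕ} (hn : Squarefree n) (h1 : n ≠ 1) :
    ∑ d ∈ n.divisors, μ d * (gpf (n / d) : ℤ) = -(μ n * n.minFac) := by
  rw [← Nat.sum_div_divisors, sum_congr rfl fun d hd => by
      rw [Nat.div_div_self (Nat.dvd_of_mem_divisors hd) hn.ne_zero,
        moebius_div_of_squarefree hn (Nat.dvd_of_mem_divisors hd), mul_assoc],
    ← mul_sum, sum_moebius_mul_gpf hn h1, mul_neg]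

theorem stmt13 (n : ℕ) (hsq : Squarefree n) (hr : 2 ≤ n.primeFactors.card) :
    (∑ d ∈ n.divisors, moebius d * (gpf (n / d) : ℤ)) =
      (-1) ^ (n.primeFactors.card - 1) * (n.minFac : ℤ) ∧
    ¬ (n : ℤ) ∣ ∑ d ∈ n.divisors, moebius d * (gpf (n / d) : ℤ) := by
  have hnotprime : ¬ n.Prime := fun hp => by simp [hp.primeFactors] at hr
  have hn1 : n ≠ 1 := by rintro rfl; simp at hr
  have hmoebius : μ n = (-1) ^ #n.primeFactors := by
    rw [← moebius_prod_primes fun p => Nat.prime_of_mem_primeFactors,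
      Nat.prod_primeFactors_of_squarefree hsq]
  have hsum : ∑ d ∈ n.divisors, μ d * (gpf (n / d) : ℤ) =
      (-1) ^ (#n.primeFactors - 1) * (n.minFac : ℤ) := by
    obtain ⟨k, hk⟩ : ∃ k, #n.primeFactors = k + 1 := ⟨_, (Nat.sub_add_cancel (by omega)).symm⟩
    rw [sum_moebius_mul_gpf_div hsq hn1, hmoebius, hk, pow_succ, Nat.add_sub_cancel]
    ring
  refine ⟨hsum, fun hdvd => ?_⟩
  rw [hsum, IsUnit.dvd_mul_left (isUnit_neg_one.pow _), Int.natCast_dvd_natCast] at hdvd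
  have hn2 : 2 ≤ n := (Nat.two_le_iff n).mpr ⟨hsq.ne_zero, hn1⟩
  exact absurd (Nat.le_of_dvd (Nat.minFac_pos n) hdvd)
    (not_le.mpr ((Nat.not_prime_iff_minFac_lt hn2).mp hnotprime))
end

section
/- A polynomial sequence (a_n(q)) in ℤ[q] satisfies the q-Gauss congruence ∑_{d∣n} μ(d) a_{n/d}(q^d) ≡ 0 (mod [n]_q) for all n ≥ 1 if and only if there exists a sequence (g_n(q)) in ℤ[q] such that a_n(q) = ∑_{d∣n} [n/d]_{q^d} · g_{n/d}(q^d) for all n ≥ 1. -/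
/-!
Substituting `q ↦ q^d` is an action of the multiplicative monoid `ℕ` on `ℤ[q]` by ring
endomorphisms, so Möbius inversion holds for divisor sums twisted by it:
`b_n = ∑_{d ∣ n} μ(d) a_{n/d}(q^d)` if and only if `a_n = ∑_{d ∣ n} b_{n/d}(q^d)`.
The `q`-Gauss congruence says that `b_n = [n]_q g_n` for some `g_n ∈ ℤ[q]`, and inverting turns
this into the stated expansion of `a_n`.
-/

open ArithmeticFunction Polynomial

/-- The `q`-integer `[k]_q = 1 + q + ⋯ + q^(k-1)` as a polynomial in `ℤ[q]`. -/
noncomputable def qInt (k : ℕ) : Polynomial ℤ := ∑ i ∈ Finset.range k, X ^ i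

theorem Nat.div_mul_eq_div_div_of_dvd {d m N : ℕ} (hd : d ∣ m) (hm : m ∣ N) :
    N / m * d = N / (m / d) := by
  obtain ⟨j, rfl⟩ := hd
  obtain ⟨k, rfl⟩ := hm
  rcases Nat.eq_zero_or_pos d with rfl | hd0
  · simp
  rcases Nat.eq_zero_or_pos j with rfl | hj0
  · simp
  rw [Nat.mul_div_cancel_left _ (Nat.mul_pos hd0 hj0), Nat.mul_div_cancel_left _ hd0,
    mul_right_comm, Nat.mul_div_cancel _ hj0, mul_comm]

section TwistedMoebius

variable {M : Type*} [AddCommGroup M] (σ : ℕ →* AddMonoid.End M)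

theorem map_div_sum_divisors_twisted (h : ℕ → ℕ → M) {m N : ℕ} (hmN : m ∣ N) :
    σ (N / m) (∑ d ∈ m.divisors, σ d (h d (m / d))) =
      ∑ x ∈ m.divisorsAntidiagonal, σ (N / x.2) (h x.1 x.2) := by
  rw [map_sum, Nat.sum_divisorsAntidiagonal (fun x y => σ (N / y) (h x y))]
  refine Finset.sum_congr rfl fun d hd => ?_
  rw [← Function.comp_apply (f := σ (N / m)), ← AddMonoid.End.coe_mul, ← map_mul,
    Nat.div_mul_eq_div_div_of_dvd (Nat.dvd_of_mem_divisors hd) hmN]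

/-- To get the `N`-th equation, apply `σ (N / m)` to the `m`-th equation for every `m ∣ N`:
this removes the twist, and ordinary Möbius inversion on the divisors of `N` applies. -/
theorem sum_eq_iff_sum_smul_moebius_eq_twisted {f F : ℕ → M} :
    (∀ n > 0, ∑ d ∈ n.divisors, σ d (f (n / d)) = F n) ↔
      ∀ n > 0, ∑ d ∈ n.divisors, moebius d • σ d (F (n / d)) = f n := by
  have untwisted (N : ℕ) := sum_eq_iff_sum_smul_moebius_eq_on (f := fun m => σ (N / m) (f m))
    (g := fun m => σ (N / m) (F m)) {m | m ∣ N} fun _ _ hmn hn => hmn.trans hn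
  have div_div_eq (N : ℕ) (hN : 0 < N) {d : ℕ} (hd : d ∈ N.divisors) : N / (N / d) = d :=
    Nat.div_div_self (Nat.dvd_of_mem_divisors hd) hN.ne'
  have σ_div_self (N : ℕ) (hN : 0 < N) (x : M) : σ (N / N) x = x := by
    rw [Nat.div_self hN, map_one, AddMonoid.End.coe_one, id]
  constructor
  · intro h N hN
    have := (untwisted N).mp (fun m hm hmN => by
        rw [← h m hm, map_div_sum_divisors_twisted σ (fun _ y => f y) hmN,
          Nat.sum_divisorsAntidiagonal' (fun _ y => σ (N / y) (f y))]) N hN dvd_rfl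
    rw [Nat.sum_divisorsAntidiagonal (fun x y => moebius x • σ (N / y) (F y)),
      σ_div_self N hN] at this
    rw [← this]
    exact Finset.sum_congr rfl fun d hd => by rw [div_div_eq N hN hd]
  · intro h N hN
    have := (untwisted N).mpr (fun m hm hmN => by
        simp_rw [← h m hm, ← map_zsmul,
          map_div_sum_divisors_twisted σ (fun x y => moebius x • F y) hmN]) N hN dvd_rfl
    rw [← Nat.sum_div_divisors, σ_div_self N hN] at this
    rw [← this]
    exact Finset.sum_congr rfl fun d hd => by rw [div_div_eq N hN hd]

end TwistedMoebius

noncomputable def Polynomial.expandMonoidHom (R : Type*) [CommSemiring R] :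
    ℕ →* AddMonoid.End R[X] where
  toFun p := (expand R p).toAddMonoidHom
  map_one' := by ext1 f; exact expand_one f
  map_mul' p q := by ext1 f; exact expand_mul p q f

@[simp]
theorem Polynomial.expandMonoidHom_apply {R : Type*} [CommSemiring R] (p : ℕ) (f : R[X]) :
    expandMonoidHom R p f = f.comp (X ^ p) :=
  rfl

theorem stmt18 (a : ℕ → Polynomial ℤ) :
    (∀ n : ℕ, 1 ≤ n →
      qInt n ∣ ∑ d ∈ n.divisors, C (moebius d : ℤ) * (a (n / d)).comp (X ^ d)) ↔
    ∃ g : ℕ → Polynomial ℤ, ∀ n : ℕ, 1 ≤ n →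
      a n = ∑ d ∈ n.divisors, (qInt (n / d)).comp (X ^ d) * (g (n / d)).comp (X ^ d) := by
  let σ := expandMonoidHom ℤ
  have moebius_sum (n : ℕ) : ∑ d ∈ n.divisors, C (moebius d : ℤ) * (a (n / d)).comp (X ^ d) =
      ∑ d ∈ n.divisors, moebius d • σ d (a (n / d)) := by
    simp only [σ, expandMonoidHom_apply, zsmul_eq_mul, eq_intCast]
  have qInt_sum (g : ℕ → ℤ[X]) (n : ℕ) :
      ∑ d ∈ n.divisors, (qInt (n / d)).comp (X ^ d) * (g (n / d)).comp (X ^ d) =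
        ∑ d ∈ n.divisors, σ d (qInt (n / d) * g (n / d)) := by
    simp only [σ, expandMonoidHom_apply, mul_comp]
  simp_rw [moebius_sum, qInt_sum, dvd_def]
  constructor
  · intro h
    choose! g hg using h
    exact ⟨g, fun n hn =>
      ((sum_eq_iff_sum_smul_moebius_eq_twisted σ (f := fun n => qInt n * g n)).mpr hg n hn).symm⟩
  · rintro ⟨g, hg⟩ n hn
    exact ⟨g n, (sum_eq_iff_sum_smul_moebius_eq_twisted σ (f := fun n => qInt n * g n)).mp
      (fun n hn => (hg n hn).symm) n hn⟩
end
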